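/- arXiv:1902.04221 — 2 statements merged into one kernel-verified Lean document; each statement's English description precedes it below -/
import Mathlib

section
/- Let c_s > 0 be a constant, and let ρ̄ : ℝ³×ℝ → ℝ (with ρ̄ > 0), p̄ : ℝ³×ℝ → ℝ³, S : ℝ³×ℝ → ℝ be smooth fields with ∇S(x,t) ≠ 0 everywhere, and let ρ̂ : ℝ³×ℝ×ℝ → ℝ be smooth and 2π-periodic in θ. Define e_k := ∇S/|∇S| and p̂ := p̄ (ρ̂/ρ̄) + c_s ρ̂ e_k. If the dispersion relation ∂_t S + (p̄/ρ̄)·∇S + c_s|∇S| = 0 holds everywhere, then at every (x,t,θ) the leading-order acoustic equations hold: (i) ∂_t S ∂_θρ̂ + ∇S·∂_θp̂ = 0; and (ii) [ (∂_t S + (p̄/ρ̄)·∇S) 𝕀 + (p̄ ⊗ ∇S)/ρ̄ ]·∂_θp̂ = ( ((∇S·p̄)/ρ̄²) p̄ − c_s² ∇S ) ∂_θρ̂. -/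
/-!
Statement 17: The leading-order acoustic equations. If the acoustic dispersion relation
`∂_t S + (p̄/ρ̄)·∇S + c_s|∇S| = 0` holds, then the fields `ρ̂` and
`p̂ = p̄(ρ̂/ρ̄) + c_s ρ̂ e_k` satisfy the leading-order linearized equations (i) and (ii).
-/

noncomputable section

abbrev V3 : Type := Fin 3 → ℝ

/-- Spacetime `(x, t)`. -/
abbrev SpT : Type := V3 × ℝ

/-- The extended domain `(x, t, θ)`. -/
abbrev D3 : Type := V3 × ℝ × ℝ

/-- Time derivative of a scalar spacetime field. -/
def pdt (f : SpT → ℝ) (w : SpT) : ℝ := fderiv ℝ f w (0, 1)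

/-- Spatial partial derivative `∂_i`. -/
def pdx (f : SpT → ℝ) (i : Fin 3) (w : SpT) : ℝ := fderiv ℝ f w (Pi.single i 1, 0)

/-- Spatial gradient. -/
def gradx (f : SpT → ℝ) (w : SpT) : V3 := fun i => pdx f i w

/-- The Euclidean norm on `ℝ³`. -/
def enorm3 (v : V3) : ℝ := Real.sqrt (∑ i, v i ^ 2)

/-- The unit wave vector `e_k = ∇S/|∇S|`. -/
def ek (S : SpT → ℝ) (w : SpT) : V3 := fun i => gradx S w i / enorm3 (gradx S w)

/-- The fluctuating momentum density `p̂ = p̄(ρ̂/ρ̄) + c_s ρ̂ e_k`. -/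
def hatp (cs : ℝ) (rbar : SpT → ℝ) (pbar : SpT → V3) (S : SpT → ℝ)
    (rhat : D3 → ℝ) (z : D3) : V3 :=
  fun i => pbar (z.1, z.2.1) i * rhat z / rbar (z.1, z.2.1)
    + cs * rhat z * ek S (z.1, z.2.1) i

lemma gradx_smooth (S : SpT → ℝ) (hS : ContDiff ℝ (⊤ : ℕ∞) S) (i : Fin 3) :
    ContDiff ℝ (⊤ : ℕ∞) (fun w => gradx S w i) := by
  have h1 : ContDiff ℝ (⊤ : ℕ∞) (fderiv ℝ S) := hS.fderiv_right (by simp)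
  exact (ContinuousLinearMap.apply ℝ ℝ ((Pi.single i 1 : V3), (0:ℝ))).contDiff.comp h1

lemma sum_sq_pos (S : SpT → ℝ) (w : SpT) (h : gradx S w ≠ 0) :
    0 < ∑ i, gradx S w i ^ 2 := by
  obtain ⟨j, hj⟩ := Function.ne_iff.mp h
  exact Finset.sum_pos' (fun i _ => sq_nonneg _)
    ⟨j, Finset.mem_univ j, pow_pos (abs_pos.mpr hj) 2 |>.trans_eq (by rw [sq_abs])⟩

lemma enorm3_pos (S : SpT → ℝ) (w : SpT) (h : gradx S w ≠ 0) :
    0 < enorm3 (gradx S w) :=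
  Real.sqrt_pos.mpr (sum_sq_pos S w h)

lemma enorm3_sq (S : SpT → ℝ) (w : SpT) :
    enorm3 (gradx S w) ^ 2 = ∑ i, gradx S w i ^ 2 :=
  Real.sq_sqrt (Finset.sum_nonneg fun i _ => sq_nonneg _)

lemma enorm3_diff (S : SpT → ℝ) (hS : ContDiff ℝ (⊤ : ℕ∞) S)
    (hgradS : ∀ w : SpT, gradx S w ≠ 0) (w : SpT) :
    DifferentiableAt ℝ (fun w => enorm3 (gradx S w)) w := by
  have hin : DifferentiableAt ℝ (fun w => ∑ i, gradx S w i ^ 2) w := by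
    apply DifferentiableAt.fun_sum
    intro i _
    exact ((gradx_smooth S hS i).differentiable (by simp) w).pow 2
  have hne : (∑ i, gradx S w i ^ 2) ≠ 0 := (sum_sq_pos S w (hgradS w)).ne'
  exact ((Real.contDiffAt_sqrt (n := 1) hne).differentiableAt one_ne_zero).comp w hin

lemma Gv_diff (cs : ℝ) (rbar : SpT → ℝ) (pbar : SpT → V3) (S : SpT → ℝ)
    (hrbar : ContDiff ℝ (⊤ : ℕ∞) rbar) (hpbar : ContDiff ℝ (⊤ : ℕ∞) pbar) (hS : ContDiff ℝ (⊤ : ℕ∞) S)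
    (hrpos : ∀ w : SpT, 0 < rbar w) (hgradS : ∀ w : SpT, gradx S w ≠ 0)
    (i : Fin 3) (w : SpT) :
    DifferentiableAt ℝ
      (fun w => pbar w i / rbar w + cs * gradx S w i / enorm3 (gradx S w)) w := by
  have h1 : DifferentiableAt ℝ (fun w => pbar w i) w :=
    (contDiff_pi.mp hpbar i).differentiable (by simp) w
  have h2 : DifferentiableAt ℝ rbar w := hrbar.differentiable (by simp) w
  have h3 : DifferentiableAt ℝ (fun w => gradx S w i) w :=
    (gradx_smooth S hS i).differentiable (by simp) w
  have h4 : DifferentiableAt ℝ (fun w => pbar w i / rbar w) w := by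
    simp only [div_eq_mul_inv]; exact h1.mul (h2.inv (hrpos w).ne')
  have h5 : DifferentiableAt ℝ (fun w => cs * gradx S w i / enorm3 (gradx S w)) w := by
    simp only [div_eq_mul_inv]
    exact (h3.const_mul cs).mul
      ((enorm3_diff S hS hgradS w).inv (enorm3_pos S w (hgradS w)).ne')
  exact h4.add h5

lemma hatp_fderiv (cs : ℝ) (rbar : SpT → ℝ) (pbar : SpT → V3) (S : SpT → ℝ)
    (hrbar : ContDiff ℝ (⊤ : ℕ∞) rbar) (hpbar : ContDiff ℝ (⊤ : ℕ∞) pbar) (hS : ContDiff ℝ (⊤ : ℕ∞) S)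
    (hrpos : ∀ w : SpT, 0 < rbar w) (hgradS : ∀ w : SpT, gradx S w ≠ 0)
    (rhat : D3 → ℝ) (hrhat : ContDiff ℝ (⊤ : ℕ∞) rhat) (z : D3) (i : Fin 3) :
    fderiv ℝ (hatp cs rbar pbar S rhat) z (0, 0, 1) i
      = (pbar (z.1, z.2.1) i / rbar (z.1, z.2.1)
          + cs * gradx S (z.1, z.2.1) i / enorm3 (gradx S (z.1, z.2.1)))
        * fderiv ℝ rhat z (0, 0, 1) := by
  set L : D3 →L[ℝ] SpT :=
    (ContinuousLinearMap.id ℝ V3).prodMap (ContinuousLinearMap.fst ℝ ℝ ℝ) with hLdef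
  have hL : ∀ z : D3, L z = (z.1, z.2.1) := fun z => rfl
  set G : Fin 3 → SpT → ℝ :=
    fun j w => pbar w j / rbar w + cs * gradx S w j / enorm3 (gradx S w) with hGdef
  have hGd : ∀ j (w : SpT), DifferentiableAt ℝ (G j) w :=
    fun j w => Gv_diff cs rbar pbar S hrbar hpbar hS hrpos hgradS j w
  have hc : ∀ j, DifferentiableAt ℝ (fun z : D3 => G j (L z)) z :=
    fun j => (hGd j (L z)).comp z L.differentiableAt
  have hr : DifferentiableAt ℝ rhat z := hrhat.differentiable (by simp) z
  have heq : hatp cs rbar pbar S rhat = fun z : D3 => fun j => G j (L z) * rhat z := by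
    funext z j
    simp only [hatp, ek, hGdef, hL]
    ring
  have hzero : fderiv ℝ (fun z : D3 => G i (L z)) z (0, 0, 1) = 0 := by
    have hcomp := ((hGd i (L z)).hasFDerivAt.comp z L.hasFDerivAt).fderiv
    rw [show (fun z : D3 => G i (L z)) = G i ∘ ⇑L from rfl, hcomp]
    have hL0 : L ((0 : V3), (0 : ℝ), (1 : ℝ)) = 0 := rfl
    rw [ContinuousLinearMap.comp_apply, hL0, map_zero]
  rw [heq, fderiv_pi (φ := fun j z => G j (L z) * rhat z) (fun j => (hc j).mul hr)]
  simp only [ContinuousLinearMap.pi_apply]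
  rw [fderiv_fun_mul (hc i) hr]
  simp only [ContinuousLinearMap.add_apply, ContinuousLinearMap.smul_apply,
    smul_eq_mul, hzero, mul_zero, add_zero]
  rw [hL]

theorem leading_order_acoustic_equations (cs : ℝ) (hcs : 0 < cs)
    (rbar : SpT → ℝ) (pbar : SpT → V3) (S : SpT → ℝ)
    (hrbar : ContDiff ℝ (⊤ : ℕ∞) rbar) (hpbar : ContDiff ℝ (⊤ : ℕ∞) pbar) (hS : ContDiff ℝ (⊤ : ℕ∞) S)
    (hrpos : ∀ w : SpT, 0 < rbar w)
    (hgradS : ∀ w : SpT, gradx S w ≠ 0)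
    (rhat : D3 → ℝ) (hrhat : ContDiff ℝ (⊤ : ℕ∞) rhat)
    (hper : ∀ z : D3, rhat (z.1, z.2.1, z.2.2 + 2 * Real.pi) = rhat z)
    -- the dispersion relation `∂_t S + (p̄/ρ̄)·∇S + c_s|∇S| = 0`
    (hdisp : ∀ w : SpT,
      pdt S w + (∑ i, pbar w i / rbar w * gradx S w i)
        + cs * enorm3 (gradx S w) = 0) :
    ∀ z : D3,
      -- (i)  `∂_t S ∂_θρ̂ + ∇S·∂_θp̂ = 0`
      (pdt S (z.1, z.2.1) * fderiv ℝ rhat z (0, 0, 1)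
        + (∑ i, gradx S (z.1, z.2.1) i
            * fderiv ℝ (hatp cs rbar pbar S rhat) z (0, 0, 1) i) = 0) ∧
      -- (ii) `[(∂_t S + (p̄/ρ̄)·∇S)𝕀 + (p̄ ⊗ ∇S)/ρ̄]·∂_θp̂
      --        = (((∇S·p̄)/ρ̄²)p̄ − c_s²∇S) ∂_θρ̂`
      (∀ i : Fin 3,
        (pdt S (z.1, z.2.1)
            + ∑ j, pbar (z.1, z.2.1) j / rbar (z.1, z.2.1) * gradx S (z.1, z.2.1) j)
            * fderiv ℝ (hatp cs rbar pbar S rhat) z (0, 0, 1) i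
          + (∑ j, pbar (z.1, z.2.1) i * gradx S (z.1, z.2.1) j / rbar (z.1, z.2.1)
              * fderiv ℝ (hatp cs rbar pbar S rhat) z (0, 0, 1) j) =
        ((∑ j, gradx S (z.1, z.2.1) j * pbar (z.1, z.2.1) j) / (rbar (z.1, z.2.1)) ^ 2
            * pbar (z.1, z.2.1) i
          - cs ^ 2 * gradx S (z.1, z.2.1) i) * fderiv ℝ rhat z (0, 0, 1)) := by
  intro z
  have key := hatp_fderiv cs rbar pbar S hrbar hpbar hS hrpos hgradS rhat hrhat z
  set w : SpT := (z.1, z.2.1) with hw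
  set N : ℝ := enorm3 (gradx S w) with hNdef
  have hN : 0 < N := enorm3_pos S w (hgradS w)
  have hNsq : N ^ 2 = ∑ i, gradx S w i ^ 2 := enorm3_sq S w
  have hdispw := hdisp w
  set r' : ℝ := fderiv ℝ rhat z (0, 0, 1) with hr'
  simp only [key]
  simp only [Fin.sum_univ_three] at hdispw hNsq ⊢
  have hNN : N * N⁻¹ = 1 := mul_inv_cancel₀ hN.ne'
  constructor
  · linear_combination r' * hdispw - cs * r' / N * hNsq + cs * r' * N * hNN
  · intro i
    linear_combination
      ((pbar w i / rbar w + cs * gradx S w i / N) * r') * hdispw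
      - cs * pbar w i * r' / (rbar w * N) * hNsq
      + (pbar w i / rbar w * cs * N * r' - cs ^ 2 * gradx S w i * r') * hNN
end
end

section
/- Let c_s > 0 be a constant, and let ρ̄ : ℝ³×ℝ → ℝ (with ρ̄ > 0), p̄ : ℝ³×ℝ → ℝ³, S : ℝ³×ℝ → ℝ be smooth, and let ρ̂, p̂ be smooth fields on ℝ³×ℝ×ℝ (scalar and ℝ³-valued respectively), 2π-periodic in θ. Suppose at a point (x,t,θ) the leading-order acoustic equations hold: (i) ∂_t S ∂_θρ̂ + ∇S·∂_θp̂ = 0 and (ii) [ (∂_t S + (p̄/ρ̄)·∇S) 𝕀 + (p̄ ⊗ ∇S)/ρ̄ ]·∂_θp̂ = ( ((∇S·p̄)/ρ̄²) p̄ − c_s² ∇S ) ∂_θρ̂. If ∂_θρ̂(x,t,θ) ≠ 0, then the acoustic dispersion relation holds at (x,t): ( ∂_t S + (p̄/ρ̄)·∇S )² = c_s² |∇S|². -/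
/-!
Statement 18: If the leading-order acoustic equations (i) and (ii) hold at a point and
`∂_θρ̂ ≠ 0` there, then the acoustic dispersion relation
`(∂_t S + (p̄/ρ̄)·∇S)² = c_s²|∇S|²` holds at the underlying spacetime point.
-/

noncomputable section

theorem acoustic_dispersion_relation (cs : ℝ) (hcs : 0 < cs)
    (rbar : SpT → ℝ) (pbar : SpT → V3) (S : SpT → ℝ)
    (hrbar : ContDiff ℝ (⊤ : ℕ∞) rbar) (hpbar : ContDiff ℝ (⊤ : ℕ∞) pbar) (hS : ContDiff ℝ (⊤ : ℕ∞) S)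
    (hrpos : ∀ w : SpT, 0 < rbar w)
    (rhat : D3 → ℝ) (phat : D3 → V3)
    (hrhat : ContDiff ℝ (⊤ : ℕ∞) rhat) (hphat : ContDiff ℝ (⊤ : ℕ∞) phat)
    (hrper : ∀ z : D3, rhat (z.1, z.2.1, z.2.2 + 2 * Real.pi) = rhat z)
    (hpper : ∀ z : D3, phat (z.1, z.2.1, z.2.2 + 2 * Real.pi) = phat z)
    (z : D3)
    -- (i) at the point `z`
    (hi : pdt S (z.1, z.2.1) * fderiv ℝ rhat z (0, 0, 1)
      + (∑ i, gradx S (z.1, z.2.1) i * fderiv ℝ phat z (0, 0, 1) i) = 0)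
    -- (ii) at the point `z`
    (hii : ∀ i : Fin 3,
      (pdt S (z.1, z.2.1)
          + ∑ j, pbar (z.1, z.2.1) j / rbar (z.1, z.2.1) * gradx S (z.1, z.2.1) j)
          * fderiv ℝ phat z (0, 0, 1) i
        + (∑ j, pbar (z.1, z.2.1) i * gradx S (z.1, z.2.1) j / rbar (z.1, z.2.1)
            * fderiv ℝ phat z (0, 0, 1) j) =
      ((∑ j, gradx S (z.1, z.2.1) j * pbar (z.1, z.2.1) j) / (rbar (z.1, z.2.1)) ^ 2
          * pbar (z.1, z.2.1) i
        - cs ^ 2 * gradx S (z.1, z.2.1) i) * fderiv ℝ rhat z (0, 0, 1))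
    (hne : fderiv ℝ rhat z (0, 0, 1) ≠ 0) :
    (pdt S (z.1, z.2.1)
        + ∑ j, pbar (z.1, z.2.1) j / rbar (z.1, z.2.1) * gradx S (z.1, z.2.1) j) ^ 2 =
      cs ^ 2 * ∑ i, gradx S (z.1, z.2.1) i ^ 2 := by

  set a := pdt S (z.1, z.2.1) with ha
  set r := rbar (z.1, z.2.1) with hrdef
  set ρ := fderiv ℝ rhat z (0, 0, 1) with hρ
  set g : Fin 3 → ℝ := fun i => gradx S (z.1, z.2.1) i with hg
  set p : Fin 3 → ℝ := fun i => pbar (z.1, z.2.1) i with hp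
  set q : Fin 3 → ℝ := fun i => fderiv ℝ phat z (0, 0, 1) i with hq
  have hr : r ≠ 0 := (hrpos (z.1, z.2.1)).ne'
  -- abbreviations for the key sums
  set GP := ∑ j, g j * p j with hGP
  set G2 := ∑ i, g i ^ 2 with hG2
  have hGP' : (∑ j, p j / r * g j) = GP / r := by
    rw [hGP, Finset.sum_div]
    exact Finset.sum_congr rfl fun j _ => by ring
  have hGQ : (∑ i, g i * q i) = -(a * ρ) := by linarith [hi]
  -- sum equation (ii) against g
  have hsum : ∑ i, g i * ((a + GP / r) * q i + p i / r * (∑ j, g j * q j)) =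
      ∑ i, g i * ((GP / r ^ 2 * p i - cs ^ 2 * g i) * ρ) := by
    refine Finset.sum_congr rfl fun i _ => ?_
    have h := hii i
    rw [hGP'] at h
    have h2 : (∑ j, p i * g j / r * q j) = p i / r * (∑ j, g j * q j) := by
      rw [Finset.mul_sum]
      exact Finset.sum_congr rfl fun j _ => by ring
    rw [h2] at h
    rw [h]
  rw [hGQ] at hsum
  have hL : ∑ i, g i * ((a + GP / r) * q i + p i / r * (-(a * ρ))) =
      (a + GP / r) * (∑ i, g i * q i) + (-(a * ρ)) / r * GP := by
    rw [hGP, Finset.mul_sum, Finset.mul_sum, ← Finset.sum_add_distrib]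
    exact Finset.sum_congr rfl fun i _ => by ring
  have hR : ∑ i, g i * ((GP / r ^ 2 * p i - cs ^ 2 * g i) * ρ) =
      GP / r ^ 2 * GP * ρ - cs ^ 2 * G2 * ρ := by
    have step : ∑ i, g i * ((GP / r ^ 2 * p i - cs ^ 2 * g i) * ρ) =
        ∑ i, (GP / r ^ 2 * (g i * p i) * ρ - cs ^ 2 * g i ^ 2 * ρ) :=
      Finset.sum_congr rfl fun i _ => by ring
    rw [step, Finset.sum_sub_distrib, hGP, hG2, ← Finset.sum_mul, ← Finset.mul_sum,
      ← Finset.sum_mul, ← Finset.mul_sum]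
  rw [hL, hR, hGQ] at hsum
  rw [hGP']
  have key0 : ((((a * r + GP) ^ 2 - cs ^ 2 * G2 * r ^ 2) * ρ) * r ^ 2) = 0 := by
    field_simp at hsum
    linear_combination (-ρ * r ^ 2) * hsum
  have key1 : ((a * r + GP) ^ 2 - cs ^ 2 * G2 * r ^ 2) * ρ = 0 := by
    rcases mul_eq_zero.mp key0 with h | h
    · exact h
    · exact absurd h (pow_ne_zero 2 hr)
  have key2 : (a * r + GP) ^ 2 - cs ^ 2 * G2 * r ^ 2 = 0 := by
    rcases mul_eq_zero.mp key1 with h | h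
    · exact h
    · exact absurd h hne
  field_simp
  linear_combination key2
end
end
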